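/- Let Ω ⊂ ℝ^d (d = 2 or 3) be a bounded polyhedral domain with a regular triangulation T_h, with vertices x_1,…,x_N of T_h. For q_h ∈ P₁ (continuous piecewise affine with zero mean) written as q_h = Σ_{i=1}^N q_i φ_i in terms of the nodal hat basis functions φ_i with supports S_i, define I_h q_h = Σ_{i=1}^N q_i χ_i, where χ_i is the characteristic function of S_i. Then for every piecewise H¹ vector field v_h that is affine on each element (so div v_h is constant on each element), d_h(v_h, q_h) = (1/(d+1)) d_h(v_h, I_h q_h), where d_h(v,q) = Σ_{K∈T_h} ∫_K (div v) q dx. -/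

import Mathlib

open MeasureTheory Set Topology
open scoped RealInnerProductSpace BigOperators NNReal Classical

noncomputable section

namespace FEM

/-- Euclidean space `ℝ^d`. -/
abbrev Euc (d : ℕ) := EuclideanSpace ℝ (Fin d)

variable {d : ℕ}

/-- The closed cell (convex hull of the vertices) of a `d`-simplex in `ℝ^d`. -/
def cell (K : Affine.Simplex ℝ (Euc d) d) : Set (Euc d) :=
  convexHull ℝ (Set.range K.points)

/-- The vertex set of the face of `K` opposite to vertex `i`. -/
def faceVerts (K : Affine.Simplex ℝ (Euc d) d) (i : Fin (d + 1)) : Set (Euc d) :=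
  K.points '' {j | j ≠ i}

/-- The closed face of `K` opposite to vertex `i`. -/
def faceSet (K : Affine.Simplex ℝ (Euc d) d) (i : Fin (d + 1)) : Set (Euc d) :=
  convexHull ℝ (faceVerts K i)

/-- The barycenter of the face of `K` opposite to vertex `i`. -/
def faceBary (K : Affine.Simplex ℝ (Euc d) d) (i : Fin (d + 1)) : Euc d :=
  Finset.centroid ℝ (Finset.univ.filter fun j => j ≠ i) K.points

/-- A simplicial triangulation of the domain `Ω`: a finite family of nondegenerate
`d`-simplices covering `closure Ω` whose interiors are pairwise disjoint. -/
structure Triangulation (d : ℕ) (Ω : Set (Euc d)) where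
  elems : Finset (Affine.Simplex ℝ (Euc d) d)
  cover : closure Ω = ⋃ K ∈ elems, cell K
  disj : ∀ K ∈ elems, ∀ K' ∈ elems, K ≠ K' →
    interior (cell K) ∩ interior (cell K') = ∅

/-- All elements of the triangulation have diameter at most `h` (mesh size ≤ `h`). -/
def meshLe {Ω : Set (Euc d)} (T : Triangulation d Ω) (h : ℝ) : Prop :=
  ∀ K ∈ T.elems, Metric.diam (cell K) ≤ h

/-- Shape regularity with constant `ρ`: `diam(K)^d ≤ ρ · |K|` for all elements. -/
def ShapeRegular {Ω : Set (Euc d)} (ρ : ℝ) (T : Triangulation d Ω) : Prop :=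
  ∀ K ∈ T.elems, Metric.diam (cell K) ^ d ≤ ρ * (volume (cell K)).toReal

/-- A vector-valued Crouzeix–Raviart finite element function: an affine map on each element,
continuous at the barycenters of interior faces and vanishing at the barycenters of
boundary faces. -/
structure CRFun {Ω : Set (Euc d)} (T : Triangulation d Ω) where
  piece : T.elems → (Euc d →ᵃ[ℝ] Euc d)
  continuity : ∀ (K K' : T.elems) (i i' : Fin (d + 1)), K ≠ K' →
    faceVerts K.1 i = faceVerts K'.1 i' →
    piece K (faceBary K.1 i) = piece K' (faceBary K'.1 i')
  boundary : ∀ (K : T.elems) (i : Fin (d + 1)),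
    (¬ ∃ (K' : T.elems) (i' : Fin (d + 1)), K' ≠ K ∧ faceVerts K'.1 i' = faceVerts K.1 i) →
    piece K (faceBary K.1 i) = 0

/-- Lebesgue measure of a set, as a real number. -/
def vol (s : Set (Euc d)) : ℝ := (volume s).toReal

/-- The (constant) divergence of an affine map `ℝ^d → ℝ^d`. -/
def divA (A : Euc d →ᵃ[ℝ] Euc d) : ℝ := LinearMap.trace ℝ (Euc d) A.linear

/-- Squared Frobenius norm of a linear map on `ℝ^d`. -/
def frobSq (L : Euc d →ₗ[ℝ] Euc d) : ℝ :=
  ∑ i, ‖L (EuclideanSpace.single i 1)‖ ^ 2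

/-- Frobenius inner product of two linear maps on `ℝ^d`. -/
def frobInner (L M : Euc d →ₗ[ℝ] Euc d) : ℝ :=
  ∑ i, ⟪L (EuclideanSpace.single i 1), M (EuclideanSpace.single i 1)⟫

variable {Ω : Set (Euc d)} {T : Triangulation d Ω}

/-- The broken norm `‖v‖_{1,h} = (Σ_K |v|_{1,K}²)^{1/2}` of a Crouzeix–Raviart function. -/
def crNorm (v : CRFun T) : ℝ :=
  Real.sqrt (∑ K : T.elems, vol (cell K.1) * frobSq (v.piece K).linear)

/-- `d_h(v,q) = Σ_K ∫_K (div v) q dx` for a CR function `v` and a scalar function `q`. -/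
def dh (v : CRFun T) (q : Euc d → ℝ) : ℝ :=
  ∑ K : T.elems, divA (v.piece K) * ∫ x in cell K.1, q x

/-- `a_h(u,v) = Σ_K ∫_K ∇u : ∇v dx` for CR functions. -/
def ah (u v : CRFun T) : ℝ :=
  ∑ K : T.elems, vol (cell K.1) * frobInner (u.piece K).linear (v.piece K).linear

/-- `B_h((u,p);(v,q)) = a_h(u,v) − d_h(v,p) − d_h(u,q)`. -/
def Bh (u : CRFun T) (p : Euc d → ℝ) (v : CRFun T) (q : Euc d → ℝ) : ℝ :=
  ah u v - dh v p - dh u q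

/-- `B_h` with viscosity: `ν a_h(u,v) − d_h(v,p) − d_h(u,q)`. -/
def Bhν (ν : ℝ) (u : CRFun T) (p : Euc d → ℝ) (v : CRFun T) (q : Euc d → ℝ) : ℝ :=
  ν * ah u v - dh v p - dh u q

/-- The `L²` pairing `(f, v) = Σ_K ∫_K f · v dx` of a vector field with a CR function. -/
def l2ip (f : Euc d → Euc d) (v : CRFun T) : ℝ :=
  ∑ K : T.elems, ∫ x in cell K.1, ⟪f x, v.piece K x⟫

/-- Membership in the continuous piecewise affine pressure space `P₁` with zero mean on `Ω`. -/
def IsP1 (T : Triangulation d Ω) (q : Euc d → ℝ) : Prop :=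
  (∀ K ∈ T.elems, ∃ A : Euc d →ᵃ[ℝ] ℝ, Set.EqOn q A (cell K)) ∧ ∫ x in Ω, q x = 0

/-- `L²(Ω)` norm of a scalar function. -/
def l2norm (Ω : Set (Euc d)) (q : Euc d → ℝ) : ℝ := Real.sqrt (∫ x in Ω, q x ^ 2)

/-- `L²(Ω)` norm of a vector field. -/
def l2normV (Ω : Set (Euc d)) (u : Euc d → Euc d) : ℝ := Real.sqrt (∫ x in Ω, ‖u x‖ ^ 2)

/-- `H¹(Ω)` norm of a scalar function. -/
def h1norm (Ω : Set (Euc d)) (p : Euc d → ℝ) : ℝ :=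
  Real.sqrt (∫ x in Ω, (p x ^ 2 + ‖gradient p x‖ ^ 2))

/-- `H¹(Ω)` norm of a vector field. -/
def h1normV (Ω : Set (Euc d)) (u : Euc d → Euc d) : ℝ :=
  Real.sqrt (∫ x in Ω, (‖u x‖ ^ 2 + ∑ j, ‖fderiv ℝ u x (EuclideanSpace.single j 1)‖ ^ 2))

/-- `H²(Ω)` norm of a vector field. -/
def h2norm (Ω : Set (Euc d)) (u : Euc d → Euc d) : ℝ :=
  Real.sqrt (∫ x in Ω, (‖u x‖ ^ 2 + (∑ j, ‖fderiv ℝ u x (EuclideanSpace.single j 1)‖ ^ 2) +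
    ∑ i, ∑ j, ‖fderiv ℝ (fun y => fderiv ℝ u y (EuclideanSpace.single i 1)) x
      (EuclideanSpace.single j 1)‖ ^ 2))

/-- Componentwise Laplacian of a vector field. -/
def vecLap (u : Euc d → Euc d) (x : Euc d) : Euc d :=
  ∑ j, fderiv ℝ (fun y => fderiv ℝ u y (EuclideanSpace.single j 1)) x (EuclideanSpace.single j 1)

/-- Divergence of a vector field. -/
def divF (u : Euc d → Euc d) (x : Euc d) : ℝ :=
  ∑ i, ⟪fderiv ℝ u x (EuclideanSpace.single i 1), EuclideanSpace.single i 1⟫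

/-- A (strong) solution of the Stokes problem `−νΔu + ∇p = f`, `div u = 0` in `Ω`,
`u = 0` on `∂Ω`. -/
structure IsStokesSolution (Ω : Set (Euc d)) (ν : ℝ) (f u : Euc d → Euc d)
    (p : Euc d → ℝ) : Prop where
  regular_u : ContDiff ℝ 2 u
  regular_p : ContDiff ℝ 1 p
  momentum : ∀ x ∈ Ω, -ν • vecLap u x + gradient p x = f x
  incompressible : ∀ x ∈ Ω, divF u x = 0
  bc : ∀ x ∈ frontier Ω, u x = 0

/-- The discrete Stokes problem: `B_h((u_h,p_h);(v_h,q_h)) = (f,v_h)` for all test pairs. -/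
def IsDiscreteSolution (T : Triangulation d Ω) (f : Euc d → Euc d)
    (uh : CRFun T) (ph : Euc d → ℝ) : Prop :=
  IsP1 T ph ∧ ∀ (v : CRFun T) (q : Euc d → ℝ), IsP1 T q → Bh uh ph v q = l2ip f v

/-- The discrete Stokes problem with viscosity `ν`. -/
def IsDiscreteSolutionν (ν : ℝ) (T : Triangulation d Ω) (f : Euc d → Euc d)
    (uh : CRFun T) (ph : Euc d → ℝ) : Prop :=
  IsP1 T ph ∧ ∀ (v : CRFun T) (q : Euc d → ℝ), IsP1 T q → Bhν ν uh ph v q = l2ip f v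

/-- `a_h(u, w) = Σ_K ∫_K ∇u : ∇w dx` where `u` is a genuine vector field and `w` is a
CR function. -/
def ahMixed (u : Euc d → Euc d) (w : CRFun T) : ℝ :=
  ∑ K : T.elems, ∫ x in cell K.1,
    ∑ j, ⟪fderiv ℝ u x (EuclideanSpace.single j 1),
      (w.piece K).linear (EuclideanSpace.single j 1)⟫

/-- Broken `H¹` error `‖u − v_h‖_{1,h}` between a vector field and a CR function. -/
def brokenErr (u : Euc d → Euc d) (v : CRFun T) : ℝ :=
  Real.sqrt (∑ K : T.elems, ∫ x in cell K.1,
    ∑ j, ‖fderiv ℝ u x (EuclideanSpace.single j 1) -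
      (v.piece K).linear (EuclideanSpace.single j 1)‖ ^ 2)

/-- `L²` error `‖u − v_h‖_{0}` between a vector field and a CR function. -/
def l2Err (u : Euc d → Euc d) (v : CRFun T) : ℝ :=
  Real.sqrt (∑ K : T.elems, ∫ x in cell K.1, ‖u x - v.piece K x‖ ^ 2)

/-- The outward unit normal to the face of `K` opposite to vertex `i`. -/
def outNormal (K : Affine.Simplex ℝ (Euc d) d) (i : Fin (d + 1)) : Euc d :=
  -(‖((Submodule.orthogonalProjectionOnto ((vectorSpan ℝ (faceVerts K i))ᗮ)
        (K.points i - faceBary K i) : Euc d))‖⁻¹ •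
    ((Submodule.orthogonalProjectionOnto ((vectorSpan ℝ (faceVerts K i))ᗮ)
        (K.points i - faceBary K i) : Euc d)))

/-- The support `S_z` of the hat function at vertex `z`: the union of the cells having
`z` as a vertex. -/
def suppS (T : Triangulation d Ω) (z : Euc d) : Set (Euc d) :=
  ⋃ K ∈ T.elems, ⋃ (_ : z ∈ Set.range K.points), cell K

/-- `d_h(v,q)` for a raw piecewise affine vector field (no continuity required). -/
def rawDh (T : Triangulation d Ω) (vp : T.elems → (Euc d →ᵃ[ℝ] Euc d))
    (q : Euc d → ℝ) : ℝ :=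
  ∑ K : T.elems, divA (vp K) * ∫ x in cell K.1, q x

/-- Mean value of `w` over the face of `K` opposite to vertex `i` (w.r.t. the
`(d−1)`-dimensional Hausdorff measure). -/
def faceMean (K : Affine.Simplex ℝ (Euc d) d) (i : Fin (d + 1)) (w : Euc d → ℝ) : ℝ :=
  (∫ x in faceSet K i, w x ∂(μH[(d : ℝ) - 1])) / (μH[(d : ℝ) - 1] (faceSet K i)).toReal

/-- A bounded Lipschitz domain: open, bounded, nonempty, and near each boundary point the
domain is, in suitable coordinates, the region below the graph of a Lipschitz function. -/
def IsLipschitzDomain (Ω : Set (Euc d)) : Prop :=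
  IsOpen Ω ∧ Bornology.IsBounded Ω ∧ Ω.Nonempty ∧
  ∀ x ∈ frontier Ω, ∃ U ∈ 𝓝 x, ∃ v : Euc d, ‖v‖ = 1 ∧
    ∃ (φ : Euc d → ℝ) (L : ℝ≥0), LipschitzWith L φ ∧
      Ω ∩ U = {y ∈ U | ⟪y, v⟫ < φ (y - ⟪y, v⟫ • v)}

/-- A smooth vector field compactly supported inside `Ω` (dense subspace of `H¹₀(Ω)^d`). -/
def TestField (Ω : Set (Euc d)) (v : Euc d → Euc d) : Prop :=
  ContDiff ℝ (⊤ : ℕ∞) v ∧ HasCompactSupport v ∧ tsupport v ⊆ Ω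

end FEM

section AuxProofs

open FEM MeasureTheory

variable {d : ℕ}

/-- The affine self-map of `ℝ^d` permuting the points of an affine basis. -/
noncomputable def permAff (b : AffineBasis (Fin (d + 1)) ℝ (Euc d))
    (σ : Equiv.Perm (Fin (d + 1))) : Euc d →ᵃ[ℝ] Euc d where
  toFun x := ∑ i, b.coord i x • b (σ i)
  linear := ∑ i, ((b.coord i).linear).smulRight (b (σ i))
  map_vadd' x v := by
    simp only [LinearMap.coe_sum, Finset.sum_apply, LinearMap.smulRight_apply, vadd_eq_add]
    rw [← Finset.sum_add_distrib]
    refine Finset.sum_congr rfl fun i _ => ?_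
    have h : b.coord i (v +ᵥ x) = (b.coord i).linear v + b.coord i x := by
      rw [AffineMap.map_vadd]; rfl
    rw [show v + x = v +ᵥ x from rfl, h, add_smul]

theorem permAff_apply (b : AffineBasis (Fin (d + 1)) ℝ (Euc d))
    (σ : Equiv.Perm (Fin (d + 1))) (x : Euc d) :
    permAff b σ x = ∑ i, b.coord i x • b (σ i) := rfl

theorem permAff_basis (b : AffineBasis (Fin (d + 1)) ℝ (Euc d))
    (σ : Equiv.Perm (Fin (d + 1))) (j : Fin (d + 1)) :
    permAff b σ (b j) = b (σ j) := by
  classical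
  rw [permAff_apply, Finset.sum_eq_single j]
  · rw [b.coord_apply_eq, one_smul]
  · intro i _ hij
    rw [b.coord_apply_ne hij, zero_smul]
  · intro h; exact absurd (Finset.mem_univ j) h

theorem coord_permAff (b : AffineBasis (Fin (d + 1)) ℝ (Euc d))
    (σ : Equiv.Perm (Fin (d + 1))) (i : Fin (d + 1)) (x : Euc d) :
    b.coord i (permAff b σ x) = b.coord (σ⁻¹ i) x := by
  have hw : ∑ j, b.coord (σ⁻¹ j) x = 1 := by
    rw [Equiv.sum_comp σ⁻¹ (fun j => b.coord j x)]
    exact b.sum_coord_apply_eq_one x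
  have h1 : permAff b σ x = Finset.univ.affineCombination ℝ ⇑b (fun j => b.coord (σ⁻¹ j) x) := by
    rw [Finset.affineCombination_eq_linear_combination _ _ _ hw, permAff_apply,
      ← Equiv.sum_comp σ (fun j => b.coord (σ⁻¹ j) x • b j)]
    simp
  rw [h1, b.coord_apply_combination_of_mem (Finset.mem_univ i) hw]

theorem permAff_invol (b : AffineBasis (Fin (d + 1)) ℝ (Euc d))
    (σ : Equiv.Perm (Fin (d + 1))) (hσ : ∀ j, σ (σ j) = j) (x : Euc d) :
    permAff b σ (permAff b σ x) = x := by
  rw [permAff_apply]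
  simp_rw [coord_permAff]
  rw [← Equiv.sum_comp σ (fun i => b.coord (σ⁻¹ i) x • b (σ i))]
  simp_rw [Equiv.Perm.inv_def, Equiv.symm_apply_apply, hσ]
  exact b.linear_combination_coord_eq_self x

theorem permAff_abs_det (b : AffineBasis (Fin (d + 1)) ℝ (Euc d))
    (σ : Equiv.Perm (Fin (d + 1))) (hσ : ∀ j, σ (σ j) = j) :
    |LinearMap.det (permAff b σ).linear| = 1 := by
  have hcomp : (permAff b σ).comp (permAff b σ) = AffineMap.id ℝ (Euc d) :=
    AffineMap.ext fun x => permAff_invol b σ hσ x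
  have hlin : (permAff b σ).linear.comp (permAff b σ).linear = LinearMap.id :=
    congrArg AffineMap.linear hcomp
  have hdet : LinearMap.det (permAff b σ).linear * LinearMap.det (permAff b σ).linear = 1 := by
    rw [← LinearMap.det_comp, hlin, LinearMap.det_id]
  rcases mul_self_eq_one_iff.mp hdet with h | h
  · rw [h, abs_one]
  · rw [h, abs_neg, abs_one]

theorem affine_hasFDerivAt (A : Euc d →ᵃ[ℝ] Euc d) (x : Euc d) :
    HasFDerivAt A (LinearMap.toContinuousLinearMap A.linear) x := by
  have h : ⇑A = fun y => A.linear y + A 0 := funext fun y => by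
    have h2 := A.map_vadd 0 y
    simpa using h2
  rw [h]
  exact (LinearMap.toContinuousLinearMap A.linear).hasFDerivAt.add_const (A 0)

theorem integral_coord (b : AffineBasis (Fin (d + 1)) ℝ (Euc d)) (i : Fin (d + 1)) :
    ∫ x in convexHull ℝ (Set.range ⇑b), b.coord i x
      = (volume (convexHull ℝ (Set.range ⇑b))).toReal / (d + 1) := by
  classical
  set s : Set (Euc d) := convexHull ℝ (Set.range ⇑b) with hs
  have hcomp : IsCompact s := (Set.finite_range ⇑b).isCompact_convexHull ℝ
  have hmeas : MeasurableSet s := hcomp.isClosed.measurableSet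
  have hint : ∀ j, IntegrableOn (fun x => b.coord j x) s volume := fun j =>
    ((b.coord j).continuous_of_finiteDimensional).continuousOn.integrableOn_compact hcomp
  have key : ∀ j, ∫ x in s, b.coord j x = ∫ x in s, b.coord i x := by
    intro j
    set σ : Equiv.Perm (Fin (d + 1)) := Equiv.swap i j with hσdef
    have hσ : ∀ k, σ (σ k) = k := fun k => Equiv.swap_apply_self i j k
    have himg : (permAff b σ) '' s = s := by
      rw [hs, AffineMap.image_convexHull]
      congr 1
      rw [← Set.range_comp]
      have hc : (⇑(permAff b σ) ∘ ⇑b) = ⇑b ∘ ⇑σ := funext fun k => permAff_basis b σ k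
      rw [hc, Function.Surjective.range_comp σ.surjective]
    have hinj : Set.InjOn (permAff b σ) s := fun x _ y _ hxy => by
      have h := congrArg (permAff b σ) hxy
      rwa [permAff_invol b σ hσ, permAff_invol b σ hσ] at h
    have hder : ∀ x ∈ s, HasFDerivWithinAt (permAff b σ)
        (LinearMap.toContinuousLinearMap (permAff b σ).linear) s x := fun x _ =>
      (affine_hasFDerivAt _ x).hasFDerivWithinAt
    have hcov := integral_image_eq_integral_abs_det_fderiv_smul volume hmeas hder hinj
        (fun x => b.coord i x)
    rw [himg] at hcov
    rw [hcov]
    refine setIntegral_congr_fun hmeas fun x _ => ?_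
    have hdet : (LinearMap.toContinuousLinearMap (permAff b σ).linear).det
        = LinearMap.det (permAff b σ).linear := by
      simp [ContinuousLinearMap.det]
    have h5 : b.coord i (permAff b σ x) = b.coord j x := by
      rw [coord_permAff]
      congr 1
      simp [hσdef, Equiv.swap_apply_left]
    rw [h5, hdet, permAff_abs_det b σ hσ, one_smul]
  have hsum : (d + 1 : ℝ) * ∫ x in s, b.coord i x = (volume s).toReal := by
    have h1 : ∑ j : Fin (d + 1), ∫ x in s, b.coord j x = (volume s).toReal := by
      rw [← integral_finset_sum _ fun j _ => hint j]
      have h2 : ∫ x in s, ∑ j, b.coord j x = ∫ x in s, (1 : ℝ) :=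
        setIntegral_congr_fun hmeas fun x _ => b.sum_coord_apply_eq_one x
      rw [h2, setIntegral_const]
      simp
      rfl
    calc (d + 1 : ℝ) * ∫ x in s, b.coord i x
        = ∑ _j : Fin (d + 1), ∫ x in s, b.coord i x := by
          rw [Finset.sum_const, Finset.card_univ, Fintype.card_fin]
          push_cast
          ring
      _ = ∑ j : Fin (d + 1), ∫ x in s, b.coord j x :=
          Finset.sum_congr rfl fun j _ => (key j).symm
      _ = (volume s).toReal := h1
  have hpos : (d + 1 : ℝ) ≠ 0 := by positivity
  rw [eq_div_iff hpos]
  linarith [hsum]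

theorem cell_compact (K : Affine.Simplex ℝ (Euc d) d) : IsCompact (cell K) :=
  (Set.finite_range K.points).isCompact_convexHull ℝ

theorem cell_measurable (K : Affine.Simplex ℝ (Euc d) d) : MeasurableSet (cell K) :=
  (cell_compact K).isClosed.measurableSet

theorem integral_affine_simplex (K : Affine.Simplex ℝ (Euc d) d) (A : Euc d →ᵃ[ℝ] ℝ) :
    ∫ x in cell K, A x
      = ((volume (cell K)).toReal / (d + 1)) * ∑ i, A (K.points i) := by
  classical
  have hspan : affineSpan ℝ (Set.range K.points) = ⊤ :=
    K.span_eq_top finrank_euclideanSpace_fin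
  let b : AffineBasis (Fin (d + 1)) ℝ (Euc d) := ⟨K.points, K.independent, hspan⟩
  have hb : ⇑b = K.points := rfl
  have hcell : cell K = convexHull ℝ (Set.range ⇑b) := by rw [hb]; rfl
  have hcomp : IsCompact (cell K) := cell_compact K
  have hmeas : MeasurableSet (cell K) := cell_measurable K
  have hA : ∀ x, A x = ∑ i, b.coord i x * A (K.points i) := by
    intro x
    conv_lhs => rw [← b.affineCombination_coord_eq_self x]
    rw [Finset.univ.map_affineCombination ⇑b _ (b.sum_coord_apply_eq_one x) A,
      Finset.affineCombination_eq_linear_combination _ _ _ (b.sum_coord_apply_eq_one x)]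
    simp [hb, smul_eq_mul]
  have h0 : ∫ x in cell K, A x = ∫ x in cell K, ∑ i, b.coord i x * A (K.points i) :=
    setIntegral_congr_fun hmeas fun x _ => hA x
  have h1 : ∫ x in cell K, ∑ i, b.coord i x * A (K.points i)
      = ∑ i, (∫ x in cell K, b.coord i x) * A (K.points i) := by
    rw [integral_finset_sum _ fun i _ =>
      (((b.coord i).continuous_of_finiteDimensional).continuousOn.integrableOn_compact
        hcomp).mul_const _]
    exact Finset.sum_congr rfl fun i _ => integral_mul_const _ _
  rw [h0, h1, Finset.mul_sum]
  refine Finset.sum_congr rfl fun i _ => ?_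
  have h2 := integral_coord b i
  rw [← hcell] at h2
  rw [h2]

theorem sum_ite_range (V : Finset (Euc d)) (p : Fin (d + 1) → Euc d)
    (hinj : Function.Injective p) (hmem : ∀ i, p i ∈ V) (f : Euc d → ℝ) :
    (∑ z ∈ V, if z ∈ Set.range p then f z else 0) = ∑ i, f (p i) := by
  classical
  rw [← Finset.sum_filter]
  have himg : V.filter (fun z => z ∈ Set.range p) = Finset.image p Finset.univ := by
    ext z
    simp only [Finset.mem_filter, Finset.mem_image, Finset.mem_univ, true_and, Set.mem_range]
    constructor
    · rintro ⟨-, i, rfl⟩; exact ⟨i, rfl⟩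
    · rintro ⟨i, rfl⟩; exact ⟨hmem i, i, rfl⟩
  rw [himg, Finset.sum_image fun a _ b _ h => hinj h]

theorem suppS_measurable {Ω : Set (Euc d)} (T : Triangulation d Ω) (z : Euc d) :
    MeasurableSet (suppS T z) := by
  refine Set.Finite.measurableSet_biUnion T.elems.finite_toSet fun K _ => ?_
  exact MeasurableSet.iUnion fun _ => cell_measurable K

theorem cell_subset_suppS {Ω : Set (Euc d)} (T : Triangulation d Ω)
    {K : Affine.Simplex ℝ (Euc d) d} (hK : K ∈ T.elems) {z : Euc d}
    (hz : z ∈ Set.range K.points) : cell K ⊆ suppS T z := fun x hx => by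
  simp only [suppS, Set.mem_iUnion]
  exact ⟨K, hK, hz, hx⟩

theorem cell_inter_null {Ω : Set (Euc d)} (T : Triangulation d Ω)
    {K K' : Affine.Simplex ℝ (Euc d) d} (hK : K ∈ T.elems) (hK' : K' ∈ T.elems)
    (hne : K ≠ K') : volume (cell K ∩ cell K') = 0 := by
  have hsub : cell K ∩ cell K' ⊆ frontier (cell K) ∪ frontier (cell K') := by
    rintro x ⟨h1, h2⟩
    by_cases hx : x ∈ interior (cell K)
    · right
      rw [(cell_compact K').isClosed.frontier_eq]
      refine ⟨h2, fun hx' => ?_⟩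
      have hdisj := T.disj K hK K' hK' hne
      exact absurd (Set.mem_inter hx hx') (by rw [hdisj]; exact Set.notMem_empty x)
    · left
      rw [(cell_compact K).isClosed.frontier_eq]
      exact ⟨h1, hx⟩
  exact measure_mono_null hsub (measure_union_null
    ((convex_convexHull ℝ _).addHaar_frontier volume)
    ((convex_convexHull ℝ _).addHaar_frontier volume))

theorem volume_cell_inter_suppS {Ω : Set (Euc d)} (T : Triangulation d Ω)
    {K : Affine.Simplex ℝ (Euc d) d} (hK : K ∈ T.elems) (z : Euc d)
    (hz : z ∉ Set.range K.points) : volume (cell K ∩ suppS T z) = 0 := by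
  have hsub : cell K ∩ suppS T z ⊆ ⋃ K' ∈ T.elems, ⋃ _ : z ∈ Set.range K'.points,
      (cell K ∩ cell K') := by
    rintro x ⟨h1, h2⟩
    simp only [suppS, Set.mem_iUnion] at h2 ⊢
    obtain ⟨K', hK', hzK', hx⟩ := h2
    exact ⟨K', hK', hzK', h1, hx⟩
  refine measure_mono_null hsub ?_
  refine (measure_biUnion_null_iff T.elems.countable_toSet).mpr fun K' hK' => ?_
  refine measure_iUnion_null fun hzK' => ?_
  have hne : K ≠ K' := fun h => hz (h ▸ hzK')
  exact cell_inter_null T hK hK' hne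

end AuxProofs

open FEM in
/-- for every piecewise affine vector field `v_h` (given by its pieces `vp`)
and every `q_h = Σ_i q_i φ_i ∈ P₁`, one has
`d_h(v_h, q_h) = (1/(d+1)) d_h(v_h, I_h q_h)` where `I_h q_h = Σ_i q_i χ_{S_i}`. -/
theorem dh_eq_inv_d_add_one_mul_dh_interp (d : ℕ) (hd : d = 2 ∨ d = 3)
    (Ω : Set (Euc d)) (hΩo : IsOpen Ω) (hΩne : Ω.Nonempty) (hΩb : Bornology.IsBounded Ω)
    (T : Triangulation d Ω) (V : Finset (Euc d))
    (hV : (V : Set (Euc d)) = ⋃ K ∈ T.elems, Set.range K.points)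
    (φ : Euc d → Euc d → ℝ)
    (hφaff : ∀ z ∈ V, ∀ K ∈ T.elems, ∃ A : Euc d →ᵃ[ℝ] ℝ, Set.EqOn (φ z) A (cell K))
    (hφnodal : ∀ z ∈ V, ∀ z' ∈ V, φ z z' = if z' = z then 1 else 0)
    (c : Euc d → ℝ)
    (hmean : (∫ x in Ω, (∑ z ∈ V, c z * φ z x)) = 0)
    (vp : T.elems → (Euc d →ᵃ[ℝ] Euc d)) :
    rawDh T vp (fun x => ∑ z ∈ V, c z * φ z x)
      = (1 / (d + 1 : ℝ)) *
        rawDh T vp (fun x => ∑ z ∈ V, c z * (suppS T z).indicator (fun _ => (1 : ℝ)) x) := by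
  classical
  unfold rawDh
  rw [Finset.mul_sum]
  refine Finset.sum_congr rfl fun K _ => ?_
  set p := K.1.points with hp
  have hmem : ∀ i, p i ∈ V := fun i => by
    rw [← Finset.mem_coe, hV]
    exact Set.mem_biUnion K.2 (Set.mem_range_self i)
  have hinj : Function.Injective p := K.1.independent.injective
  set C : ℝ := (volume (cell K.1)).toReal / (d + 1) with hC
  have hrep : ∀ z ∈ V, ∃ A : Euc d →ᵃ[ℝ] ℝ, Set.EqOn (φ z) ⇑A (cell K.1) :=
    fun z hz => hφaff z hz K.1 K.2
  -- the φ side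
  have hphi : ∫ x in cell K.1, (∑ z ∈ V, c z * φ z x) = C * ∑ i, c (p i) := by
    have hint : ∀ z ∈ V, IntegrableOn (fun x => c z * φ z x) (cell K.1) volume := by
      intro z hz
      obtain ⟨A, hA⟩ := hrep z hz
      have h1 : IntegrableOn (fun x => c z * A x) (cell K.1) volume :=
        ((continuous_const.mul A.continuous_of_finiteDimensional).continuousOn).integrableOn_compact
          (cell_compact _)
      exact h1.congr_fun (fun x hx => by show c z * A x = c z * φ z x; rw [hA hx]) (cell_measurable _)
    rw [integral_finset_sum V hint]
    have hterm : ∀ z ∈ V, ∫ x in cell K.1, c z * φ z x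
        = c z * (C * ∑ i, if p i = z then (1 : ℝ) else 0) := by
      intro z hz
      obtain ⟨A, hA⟩ := hrep z hz
      have h1 : ∫ x in cell K.1, c z * φ z x = c z * ∫ x in cell K.1, A x := by
        rw [setIntegral_congr_fun (cell_measurable _)
          (show Set.EqOn (fun x => c z * φ z x) (fun x => c z * A x) (cell K.1) from
            fun x hx => by show c z * φ z x = c z * A x; rw [hA hx])]
        exact integral_const_mul _ _
      rw [h1, integral_affine_simplex]
      congr 1
      rw [← hC]
      congr 1
      refine Finset.sum_congr rfl fun i _ => ?_
      rw [← hA (subset_convexHull ℝ _ (Set.mem_range_self i)),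
        hφnodal z hz (p i) (hmem i)]
    rw [Finset.sum_congr rfl hterm]
    have halg : ∀ z ∈ V, c z * (C * ∑ i, if p i = z then (1 : ℝ) else 0)
        = ∑ i, if p i = z then C * c z else 0 := by
      intro z _
      rw [Finset.mul_sum, Finset.mul_sum]
      refine Finset.sum_congr rfl fun i _ => ?_
      by_cases h : p i = z
      · simp only [h, if_true]; ring
      · simp only [h, if_false]; ring
    rw [Finset.sum_congr rfl halg, Finset.sum_comm, Finset.mul_sum]
    refine Finset.sum_congr rfl fun i _ => ?_
    rw [Finset.sum_ite_eq V (p i) (fun z => C * c z), if_pos (hmem i)]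
  -- the χ side
  have hchi : ∫ x in cell K.1, (∑ z ∈ V, c z * (suppS T z).indicator (fun _ => (1 : ℝ)) x)
      = (volume (cell K.1)).toReal * ∑ i, c (p i) := by
    have hint : ∀ z ∈ V, IntegrableOn
        (fun x => c z * (suppS T z).indicator (fun _ => (1 : ℝ)) x) (cell K.1) volume := by
      intro z _
      have h1 : IntegrableOn ((suppS T z).indicator (fun _ => (1 : ℝ))) (cell K.1) volume :=
        ((integrableOn_const_iff).mpr (Or.inr (cell_compact K.1).measure_lt_top)).indicator
          (suppS_measurable T z)
      exact h1.const_mul (c z)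
    rw [integral_finset_sum V hint]
    have hterm : ∀ z ∈ V, ∫ x in cell K.1, c z * (suppS T z).indicator (fun _ => (1 : ℝ)) x
        = if z ∈ Set.range p then c z * (volume (cell K.1)).toReal else 0 := by
      intro z _
      rw [integral_const_mul, setIntegral_indicator (suppS_measurable T z), setIntegral_const]
      by_cases h : z ∈ Set.range p
      · rw [if_pos h, Set.inter_eq_self_of_subset_left (cell_subset_suppS T K.2 h)]
        simp [Measure.real]
      · rw [if_neg h, Measure.real, volume_cell_inter_suppS T K.2 z h]
        simp
    rw [Finset.sum_congr rfl hterm,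
      sum_ite_range V p hinj hmem (fun z => c z * (volume (cell K.1)).toReal),
      ← Finset.sum_mul]
    ring
  rw [hphi, hchi, hC]
  have hpos : (d + 1 : ℝ) ≠ 0 := by positivity
  field_simp
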